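/- Let X be a random vector in ℝⁿ, n ≥ 2, with finite moments of all orders, and let g be a standard gaussian vector in ℝⁿ. Suppose there is a unit vector v ∈ S^{n-1}, an even integer r ≥ 2, and 0 < δ ≤ 1 such that |E[⟨X,v⟩^r] − E[⟨g,v⟩^r]| ≥ δ·E[⟨g,v⟩^r]. Then either |E[‖X‖₂^r] − E[‖g‖₂^r]| ≥ (δ²/4)·E[⟨g,v⟩^r], or |E[⟨X,X'⟩^r] − E[⟨g,g'⟩^r]| ≥ (15δ²/64)·(E[⟨g,v⟩^r])², where X', g' are independent copies of X, g respectively. -/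

import Mathlib

open MeasureTheory ProbabilityTheory Real
open scoped RealInnerProductSpace ENNReal

noncomputable section

/-- The standard gaussian measure on `ℝⁿ` (mean `0`, identity covariance). -/
def stdGaussian (n : ℕ) : Measure (EuclideanSpace ℝ (Fin n)) :=
  (Measure.pi fun _ : Fin n => gaussianReal 0 1).map
    (EuclideanSpace.equiv (Fin n) ℝ).symm

/-- The uniform probability distribution on the unit sphere `S^{n-1}`, realized as the
pushforward of the standard gaussian under normalization. -/
def sphereUniform (n : ℕ) : Measure (EuclideanSpace ℝ (Fin n)) :=
  (stdGaussian n).map fun x => ‖x‖⁻¹ • x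

/-- The `r`-th moment tensor `M^r = E[X^{⊗ r}]` of a distribution `ν` on `ℝⁿ`, realized in
coordinates as the element of the Euclidean space indexed by multi-indices `Fin r → Fin n`
whose `(i₁,…,i_r)` entry is `E[X_{i₁} ⋯ X_{i_r}]`.  The Euclidean inner product on this space
is exactly the tensor inner product satisfying `⟪u^{⊗r}, v^{⊗r}⟫ = ⟪u,v⟫^r`. -/
def momentTensor {n : ℕ} (r : ℕ) (ν : Measure (EuclideanSpace ℝ (Fin n))) :
    EuclideanSpace ℝ (Fin r → Fin n) :=
  (EuclideanSpace.equiv (Fin r → Fin n) ℝ).symm fun idx => ∫ x, ∏ j, x (idx j) ∂ν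

/-- The distribution of the rotational symmetrization `X_rot = ‖X‖·θ` of a distribution `ν`
on `ℝⁿ`, where `θ` is uniform on the sphere and independent of `‖X‖`. -/
def rotSymMeas {n : ℕ} (ν : Measure (EuclideanSpace ℝ (Fin n))) :
    Measure (EuclideanSpace ℝ (Fin n)) :=
  ((ν.map fun x => ‖x‖).prod (sphereUniform n)).map fun p => p.1 • p.2

/-- The `r`-th eccentricity tensor `E^r_X = M^r_X − M^r_{X_rot}`. -/
def eccTensor {n : ℕ} (r : ℕ) (ν : Measure (EuclideanSpace ℝ (Fin n))) :
    EuclideanSpace ℝ (Fin r → Fin n) :=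
  momentTensor r ν - momentTensor r (rotSymMeas ν)

variable {Ω : Type*} [MeasurableSpace Ω]

/-- The test matrix `Φ_{X,α} = E[e^{−α‖X‖²} X Xᵀ] / E[e^{−α‖X‖²}]`. -/
def PhiMat {n : ℕ} (P : Measure Ω) (X : Ω → EuclideanSpace ℝ (Fin n)) (α : ℝ) :
    Matrix (Fin n) (Fin n) ℝ :=
  (∫ ω, Real.exp (-α * ‖X ω‖ ^ 2) ∂P)⁻¹ •
    Matrix.of fun i j => ∫ ω, Real.exp (-α * ‖X ω‖ ^ 2) * (X ω i * X ω j) ∂P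

/-- The test matrix `Ψ_{X,α} = E[e^{−α⟨X,X'⟩} X (X')ᵀ] / E[e^{−α⟨X,X'⟩}]`, where `X'` is an
independent copy of `X`. -/
def PsiMat {n : ℕ} (P : Measure Ω) (X X' : Ω → EuclideanSpace ℝ (Fin n)) (α : ℝ) :
    Matrix (Fin n) (Fin n) ℝ :=
  (∫ ω, Real.exp (-α * ⟪X ω, X' ω⟫) ∂P)⁻¹ •
    Matrix.of fun i j => ∫ ω, Real.exp (-α * ⟪X ω, X' ω⟫) * (X ω i * X' ω j) ∂P

/-- The partition function `Z_{Φ,X}(α) = E[e^{−α‖X‖²}]`. -/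
def ZPhi {n : ℕ} (P : Measure Ω) (X : Ω → EuclideanSpace ℝ (Fin n)) (α : ℝ) : ℝ :=
  ∫ ω, Real.exp (-α * ‖X ω‖ ^ 2) ∂P

/-- The partition function `Z_{Ψ,X}(α) = E[e^{−α⟨X,X'⟩}]`. -/
def ZPsi {n : ℕ} (P : Measure Ω) (X X' : Ω → EuclideanSpace ℝ (Fin n)) (α : ℝ) : ℝ :=
  ∫ ω, Real.exp (-α * ⟪X ω, X' ω⟫) ∂P

/-- `Z_{Φ,g}` for the standard gaussian on `ℝⁿ`. -/
def ZPhiGauss (n : ℕ) (α : ℝ) : ℝ := ∫ x, Real.exp (-α * ‖x‖ ^ 2) ∂stdGaussian n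

/-- `Z_{Ψ,g}` for the standard gaussian on `ℝⁿ`. -/
def ZPsiGauss (n : ℕ) (α : ℝ) : ℝ :=
  ∫ p, Real.exp (-α * ⟪p.1, p.2⟫) ∂((stdGaussian n).prod (stdGaussian n))

/-- `X` is subgaussian with subgaussian norm at most `K`:
every unit marginal `⟨X,v⟩` has `ψ₂`-norm at most `K`. -/
def SubgaussianLE {n : ℕ} (P : Measure Ω) (X : Ω → EuclideanSpace ℝ (Fin n)) (K : ℝ) : Prop :=
  ∀ v : EuclideanSpace ℝ (Fin n), ‖v‖ = 1 →
    ∫ ω, Real.exp (⟪X ω, v⟫ ^ 2 / K ^ 2) ∂P ≤ 2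

/-- `X` is a subexponential random vector: the `ψ₁`-norms of the unit marginals `⟨X,v⟩` are
uniformly bounded. -/
def SubExp {n : ℕ} (P : Measure Ω) (X : Ω → EuclideanSpace ℝ (Fin n)) : Prop :=
  ∃ K : ℝ, 0 < K ∧ ∀ v : EuclideanSpace ℝ (Fin n), ‖v‖ = 1 →
    ∫ ω, Real.exp (|⟪X ω, v⟫| / K) ∂P ≤ 2

/-- The `r`-th moment of a one-dimensional standard gaussian, `E[⟨g,v⟩^r]` for a unit vector
`v`. -/
def gaussMoment (r : ℕ) : ℝ := ∫ t : ℝ, t ^ r ∂gaussianReal 0 1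

/-- `γ_r = E[|⟨g,v⟩|^r]` for a unit vector `v`. -/
def gammaMoment (r : ℕ) : ℝ := ∫ t : ℝ, |t| ^ r ∂gaussianReal 0 1

/-- The deviation from gaussian moments,
`D_{X,r} = sup_{v ∈ S^{n-1}} |E[⟨X,v⟩^r] − E[⟨g,v⟩^r]|`. -/
def Ddev {n : ℕ} (P : Measure Ω) (X : Ω → EuclideanSpace ℝ (Fin n)) (r : ℕ) : ℝ :=
  ⨆ v : Metric.sphere (0 : EuclideanSpace ℝ (Fin n)) 1,
    |(∫ ω, ⟪X ω, (v : EuclideanSpace ℝ (Fin n))⟫ ^ r ∂P) - gaussMoment r|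

/-- Coordinates (w.r.t. a fixed orthonormal basis of `E`) of the orthogonal projection of `X`
onto the subspace `E`; this represents the component `X̃` of `X` in `E`. -/
def ngcaCoord {n : ℕ} (E : Submodule ℝ (EuclideanSpace ℝ (Fin n)))
    (X : Ω → EuclideanSpace ℝ (Fin n)) (ω : Ω) :
    EuclideanSpace ℝ (Fin (Module.finrank ℝ E)) :=
  (stdOrthonormalBasis ℝ E).repr (E.orthogonalProjectionOnto (X ω))

/-- The empirical test matrix `Φ̂` built from the data points `Xs 1, …, Xs N`. -/
def PhiHat {n N : ℕ} (Xs : Fin N → EuclideanSpace ℝ (Fin n)) (α : ℝ) :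
    Matrix (Fin n) (Fin n) ℝ :=
  (∑ i, Real.exp (-α * ‖Xs i‖ ^ 2))⁻¹ •
    Matrix.of fun a b => ∑ i, Real.exp (-α * ‖Xs i‖ ^ 2) * (Xs i a * Xs i b)

/-- The empirical test matrix `Ψ̂` built from the data points `Xs 1, …, Xs N, Xs' 1, …, Xs' N`. -/
def PsiHat {n N : ℕ} (Xs Xs' : Fin N → EuclideanSpace ℝ (Fin n)) (α : ℝ) :
    Matrix (Fin n) (Fin n) ℝ :=
  (2 * ∑ i, Real.exp (-α * ⟪Xs i, Xs' i⟫))⁻¹ •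
    Matrix.of fun a b => ∑ i, Real.exp (-α * ⟪Xs i, Xs' i⟫) *
      (Xs i a * Xs' i b + Xs' i a * Xs i b)

/-- The ℓ²→ℓ² operator norm of a real `n × n` matrix. -/
def opNorm {n : ℕ} (M : Matrix (Fin n) (Fin n) ℝ) : ℝ :=
  ‖Matrix.toEuclideanCLM (𝕜 := ℝ) M‖

/-- The matrix (in the standard basis) of the orthogonal projection onto a subspace `F ⊆ ℝⁿ`;
if the columns of `U` form an orthonormal basis of `F` this is `U Uᵀ`. -/
def projMat {n : ℕ} (F : Submodule ℝ (EuclideanSpace ℝ (Fin n))) :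
    Matrix (Fin n) (Fin n) ℝ :=
  Matrix.of fun i j =>
    ⟪(F.subtypeL.comp F.orthogonalProjectionOnto) (EuclideanSpace.single j (1 : ℝ)),
      EuclideanSpace.single i (1 : ℝ)⟫

/-- The distance `d(F,F') = ‖U Uᵀ − U' (U')ᵀ‖_F` between two subspaces of `ℝⁿ`
(the Frobenius norm of the difference of the orthogonal projections). -/
def subDist {n : ℕ} (F F' : Submodule ℝ (EuclideanSpace ℝ (Fin n))) : ℝ :=
  Real.sqrt (∑ i, ∑ j, (projMat F i j - projMat F' i j) ^ 2)

/-- The span of all eigenvectors of a symmetric matrix `M` whose eigenvalue is farther than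
`β` from the reference value `c`. -/
def eigSpanFar {n : ℕ} (M : Matrix (Fin n) (Fin n) ℝ) (c β : ℝ) :
    Submodule ℝ (EuclideanSpace ℝ (Fin n)) :=
  ⨆ lam ∈ {l : ℝ | β < |l - c|}, Module.End.eigenspace (Matrix.toEuclideanLin M) lam

/-!
Encode the `r`-th moments of a distribution on `ℝⁿ` by its moment tensor `M = E[X^{⊗r}]`, a
vector of the Euclidean space `ℝ^{n^r}` in which `⟪x^{⊗r}, y^{⊗r}⟫ = ⟪x, y⟫^r`. Then
`E⟨X,v⟩^r - E⟨g,v⟩^r = ⟪M_X - M_g, v^{⊗r}⟫`, and Cauchy–Schwarz bounds its square by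
`‖M_X - M_g‖² = E⟨X,X'⟩^r - 2⟪M_X, M_g⟫ + E⟨g,g'⟩^r`. Since every marginal `⟨g,w⟩` is
`N(0, ‖w‖²)`, with `m = E⟨g,v⟩^r` we get `⟪M_X, M_g⟫ = m E‖X‖^r` and `E⟨g,g'⟩^r = m E‖g‖^r`, so
`δ²m² ≤ (E⟨X,X'⟩^r - E⟨g,g'⟩^r) - 2m (E‖X‖^r - E‖g‖^r)`: if the norm moments are within
`δ²m/4` of each other, the inner-product moments differ by at least `δ²m²/2`.
-/

lemma stdGaussian_eq_stdGaussian (n : ℕ) :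
    stdGaussian n = ProbabilityTheory.stdGaussian (EuclideanSpace ℝ (Fin n)) :=
  map_pi_eq_stdGaussian

section StdGaussian
variable {E : Type*} [NormedAddCommGroup E] [InnerProductSpace ℝ E] [FiniteDimensional ℝ E]
  [MeasurableSpace E] [BorelSpace E]

lemma map_inner_stdGaussian (w : E) :
    (ProbabilityTheory.stdGaussian E).map (fun y => ⟪y, w⟫) =
      (gaussianReal 0 1).map (‖w‖ * ·) := by
  have h := IsGaussian.map_eq_gaussianReal (μ := ProbabilityTheory.stdGaussian E) (innerSL ℝ w)
  simp only [integral_strongDual_stdGaussian, variance_dual_stdGaussian, innerSL_apply_norm] at h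
  rw [gaussianReal_map_const_mul, mul_zero, mul_one]
  convert h using 2
  · ext y
    exact real_inner_comm _ _
  · exact (Real.toNNReal_of_nonneg (sq_nonneg _)).symm

lemma integral_inner_pow_stdGaussian (w : E) (r : ℕ) :
    ∫ y, ⟪y, w⟫ ^ r ∂ProbabilityTheory.stdGaussian E = ‖w‖ ^ r * gaussMoment r := by
  rw [← integral_map (f := (· ^ r)) (by fun_prop) (by fun_prop), map_inner_stdGaussian,
    integral_map (by fun_prop) (by fun_prop), gaussMoment, ← integral_const_mul]
  simp_rw [mul_pow]

lemma integrable_norm_pow_stdGaussian (r : ℕ) :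
    Integrable (fun y : E => ‖y‖ ^ r) (ProbabilityTheory.stdGaussian E) :=
  (IsGaussian.memLp_id _ r (by simp)).integrable_norm_pow'

end StdGaussian

section TensorPower
variable {ι : Type*}

def tensorPow (r : ℕ) (x : EuclideanSpace ℝ ι) : EuclideanSpace ℝ (Fin r → ι) :=
  WithLp.toLp 2 fun idx => ∏ j, x (idx j)

lemma inner_tensorPow [Fintype ι] (r : ℕ) (x y : EuclideanSpace ℝ ι) :
    ⟪tensorPow r x, tensorPow r y⟫ = ⟪x, y⟫ ^ r := by
  simp [tensorPow, EuclideanSpace.inner_eq_star_dotProduct, dotProduct, Fintype.sum_pow,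
    Finset.prod_mul_distrib]

lemma norm_tensorPow [Fintype ι] (r : ℕ) (x : EuclideanSpace ℝ ι) :
    ‖tensorPow r x‖ = ‖x‖ ^ r := by
  have h : ‖tensorPow r x‖ ^ 2 = (‖x‖ ^ r) ^ 2 := by
    rw [← real_inner_self_eq_norm_sq, inner_tensorPow, real_inner_self_eq_norm_sq, ← pow_mul,
      ← pow_mul, mul_comm]
  exact (pow_left_inj₀ (norm_nonneg _) (by positivity) two_ne_zero).1 h

lemma continuous_tensorPow (r : ℕ) : Continuous (tensorPow (ι := ι) r) := by
  unfold tensorPow; fun_prop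

lemma integrable_tensorPow [Fintype ι] {r : ℕ} {ν : Measure (EuclideanSpace ℝ ι)}
    (hν : Integrable (fun x => ‖x‖ ^ r) ν) :
    Integrable (tensorPow r) ν :=
  (integrable_norm_iff (continuous_tensorPow r).aestronglyMeasurable).1 <| by
    simpa only [norm_tensorPow] using hν

lemma integrable_inner_pow_prod [Fintype ι] {r : ℕ} {ν μ : Measure (EuclideanSpace ℝ ι)}
    [SFinite ν] [SFinite μ] (hν : Integrable (fun x => ‖x‖ ^ r) ν)
    (hμ : Integrable (fun x => ‖x‖ ^ r) μ) :
    Integrable (fun p : EuclideanSpace ℝ ι × EuclideanSpace ℝ ι => ⟪p.1, p.2⟫ ^ r)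
      (ν.prod μ) := by
  refine (hν.mul_prod hμ).mono' (by fun_prop) (ae_of_all _ fun p => ?_)
  rw [norm_pow, ← mul_pow]
  exact pow_le_pow_left₀ (norm_nonneg _) (abs_real_inner_le_norm _ _) r

end TensorPower

section MomentTensor
variable {n r : ℕ} {ν μ : Measure (EuclideanSpace ℝ (Fin n))}

lemma momentTensor_eq_integral (hν : Integrable (fun x => ‖x‖ ^ r) ν) :
    momentTensor r ν = ∫ x, tensorPow r x ∂ν := by
  ext idx
  change _ = EuclideanSpace.proj idx _
  rw [← (EuclideanSpace.proj idx).integral_comp_comm (integrable_tensorPow hν)]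
  simp [momentTensor, tensorPow]

lemma inner_tensorPow_momentTensor (hν : Integrable (fun x => ‖x‖ ^ r) ν)
    (w : EuclideanSpace ℝ (Fin n)) :
    ⟪tensorPow r w, momentTensor r ν⟫ = ∫ x, ⟪w, x⟫ ^ r ∂ν := by
  simp_rw [momentTensor_eq_integral hν, ← integral_inner (integrable_tensorPow hν),
    inner_tensorPow]

lemma inner_momentTensor (hν : Integrable (fun x => ‖x‖ ^ r) ν)
    (hμ : Integrable (fun x => ‖x‖ ^ r) μ) :
    ⟪momentTensor r ν, momentTensor r μ⟫ = ∫ x, ∫ y, ⟪x, y⟫ ^ r ∂μ ∂ν := by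
  rw [real_inner_comm, momentTensor_eq_integral hν, ← integral_inner (integrable_tensorPow hν)]
  congr with x
  rw [real_inner_comm, inner_tensorPow_momentTensor hμ]

lemma integral_inner_pow_prod [SFinite ν] [SFinite μ] (hν : Integrable (fun x => ‖x‖ ^ r) ν)
    (hμ : Integrable (fun x => ‖x‖ ^ r) μ) :
    ∫ p, ⟪p.1, p.2⟫ ^ r ∂(ν.prod μ) = ⟪momentTensor r ν, momentTensor r μ⟫ := by
  rw [integral_prod _ (integrable_inner_pow_prod hν hμ), inner_momentTensor hν hμ]

end MomentTensor

section Comparison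
variable {n r : ℕ} {ν : Measure (EuclideanSpace ℝ (Fin n))}

lemma inner_momentTensor_stdGaussian (hν : Integrable (fun x => ‖x‖ ^ r) ν) :
    ⟪momentTensor r ν, momentTensor r (stdGaussian n)⟫ = gaussMoment r * ∫ x, ‖x‖ ^ r ∂ν := by
  rw [stdGaussian_eq_stdGaussian, inner_momentTensor hν (integrable_norm_pow_stdGaussian r),
    ← integral_const_mul]
  congr with x
  simp_rw [real_inner_comm _ x, integral_inner_pow_stdGaussian, mul_comm]

lemma sq_integral_inner_pow_sub_gaussMoment_le [SFinite ν]
    (hν : Integrable (fun x => ‖x‖ ^ r) ν) {v : EuclideanSpace ℝ (Fin n)} (hv : ‖v‖ = 1) :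
    (∫ x, ⟪x, v⟫ ^ r ∂ν - gaussMoment r) ^ 2 ≤
      (∫ p, ⟪p.1, p.2⟫ ^ r ∂(ν.prod ν) -
          ∫ p, ⟪p.1, p.2⟫ ^ r ∂((stdGaussian n).prod (stdGaussian n))) -
        2 * gaussMoment r * (∫ x, ‖x‖ ^ r ∂ν - ∫ x, ‖x‖ ^ r ∂stdGaussian n) := by
  have hg : Integrable (fun x => ‖x‖ ^ r) (stdGaussian n) :=
    stdGaussian_eq_stdGaussian n ▸ integrable_norm_pow_stdGaussian r
  have : IsProbabilityMeasure (stdGaussian n) := stdGaussian_eq_stdGaussian n ▸ inferInstance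
  set Mν := momentTensor r ν
  set Mg := momentTensor r (stdGaussian n)
  have hdev : ∫ x, ⟪x, v⟫ ^ r ∂ν - gaussMoment r = ⟪tensorPow r v, Mν - Mg⟫ := by
    rw [inner_sub_right, inner_tensorPow_momentTensor hν, inner_tensorPow_momentTensor hg,
      stdGaussian_eq_stdGaussian]
    simp_rw [real_inner_comm _ v, integral_inner_pow_stdGaussian, hv, one_pow, one_mul]
  calc (∫ x, ⟪x, v⟫ ^ r ∂ν - gaussMoment r) ^ 2 = ⟪tensorPow r v, Mν - Mg⟫ ^ 2 := by rw [hdev]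
    _ ≤ ‖Mν - Mg‖ ^ 2 := by
      rw [← sq_abs]
      gcongr
      simpa [norm_tensorPow, hv] using abs_real_inner_le_norm (tensorPow r v) (Mν - Mg)
    _ = ⟪Mν, Mν⟫ - 2 * ⟪Mν, Mg⟫ + ⟪Mg, Mg⟫ := by
      rw [norm_sub_sq_real, real_inner_self_eq_norm_sq, real_inner_self_eq_norm_sq]
    _ = _ := by
      rw [integral_inner_pow_prod hν hν, integral_inner_pow_prod hg hg,
        inner_momentTensor_stdGaussian hν, inner_momentTensor_stdGaussian hg]
      ring

end Comparison

lemma gaussMoment_nonneg {r : ℕ} (hr : Even r) : 0 ≤ gaussMoment r :=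
  integral_nonneg fun t => hr.pow_nonneg t

lemma le_abs_or_le_abs_of_sq_le_sub {δ m a A B : ℝ} (hδ : 0 ≤ δ) (hm : 0 ≤ m)
    (ha : δ * m ≤ |a|) (hsq : a ^ 2 ≤ A - 2 * m * B) :
    δ ^ 2 / 4 * m ≤ |B| ∨ 15 * δ ^ 2 / 64 * m ^ 2 ≤ |A| := by
  refine or_iff_not_imp_left.2 fun hB => ?_
  have hδa : (δ * m) ^ 2 ≤ a ^ 2 := by
    rw [← sq_abs a]; exact pow_le_pow_left₀ (by positivity) ha 2
  have hmB : m * |B| ≤ δ ^ 2 / 4 * m ^ 2 := by nlinarith [not_le.1 hB]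
  nlinarith [neg_abs_le B, le_abs_self A, sq_nonneg (δ * m)]

theorem comparison_even_moments_general
    {Ω : Type*} [MeasurableSpace Ω] (P : Measure Ω) [IsProbabilityMeasure P]
    {n : ℕ} (X X' : Ω → EuclideanSpace ℝ (Fin n))
    (hX : Measurable X) (hX' : Measurable X')
    (hcopy : Measure.map X' P = Measure.map X P)
    (hindep : IndepFun X X' P)
    (hmom : ∀ k : ℕ, Integrable (fun ω => ‖X ω‖ ^ k) P)
    (v : EuclideanSpace ℝ (Fin n)) (hv : ‖v‖ = 1)
    (r : ℕ) (hreven : Even r)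
    (δ : ℝ) (hδ0 : 0 < δ)
    (hdev : δ * (∫ x, ⟪x, v⟫ ^ r ∂stdGaussian n) ≤
      |(∫ ω, ⟪X ω, v⟫ ^ r ∂P) - ∫ x, ⟪x, v⟫ ^ r ∂stdGaussian n|) :
    δ ^ 2 / 4 * (∫ x, ⟪x, v⟫ ^ r ∂stdGaussian n) ≤
        |(∫ ω, ‖X ω‖ ^ r ∂P) - ∫ x, ‖x‖ ^ r ∂stdGaussian n| ∨
    15 * δ ^ 2 / 64 * (∫ x, ⟪x, v⟫ ^ r ∂stdGaussian n) ^ 2 ≤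
        |(∫ ω, ⟪X ω, X' ω⟫ ^ r ∂P) -
          ∫ p, ⟪p.1, p.2⟫ ^ r ∂((stdGaussian n).prod (stdGaussian n))| := by
  set ν := P.map X
  have hνmom : Integrable (fun x => ‖x‖ ^ r) ν :=
    (integrable_map_measure (g := fun x => ‖x‖ ^ r) (by fun_prop) hX.aemeasurable).2 (hmom r)
  have hm : ∫ x, ⟪x, v⟫ ^ r ∂stdGaussian n = gaussMoment r := by
    rw [stdGaussian_eq_stdGaussian, integral_inner_pow_stdGaussian, hv, one_pow, one_mul]
  have hmarginal : ∫ ω, ⟪X ω, v⟫ ^ r ∂P = ∫ x, ⟪x, v⟫ ^ r ∂ν := by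
    rw [integral_map hX.aemeasurable (by fun_prop)]
  have hnorm : ∫ ω, ‖X ω‖ ^ r ∂P = ∫ x, ‖x‖ ^ r ∂ν := by
    rw [integral_map hX.aemeasurable (by fun_prop)]
  have hpair : ∫ ω, ⟪X ω, X' ω⟫ ^ r ∂P = ∫ p, ⟪p.1, p.2⟫ ^ r ∂(ν.prod ν) := by
    have hlaw : P.map (fun ω => (X ω, X' ω)) = ν.prod ν := by
      rw [(indepFun_iff_map_prod_eq_prod_map_map hX.aemeasurable hX'.aemeasurable).1 hindep,
        hcopy]
    rw [← hlaw, integral_map (by fun_prop) (by fun_prop)]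
  rw [hm, hmarginal] at hdev
  rw [hm, hnorm, hpair]
  exact le_abs_or_le_abs_of_sq_le_sub hδ0.le (gaussMoment_nonneg hreven) hdev
    (sq_integral_inner_pow_sub_gaussMoment_le hνmom hv)

/-- Comparison lemma for even moments: if some unit marginal `⟨X,v⟩` has `r`-th moment
(`r ≥ 2` even) deviating from the gaussian by a `δ`-fraction, then either the norm moments
or the inner-product moments of `X` deviate from the corresponding gaussian quantities. -/
theorem comparison_even_moments
    {Ω : Type*} [MeasurableSpace Ω] (P : Measure Ω) [IsProbabilityMeasure P]
    {n : ℕ} (hn : 2 ≤ n) (X X' : Ω → EuclideanSpace ℝ (Fin n))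
    (hX : Measurable X) (hX' : Measurable X')
    (hcopy : Measure.map X' P = Measure.map X P)
    (hindep : IndepFun X X' P)
    (hmom : ∀ k : ℕ, Integrable (fun ω => ‖X ω‖ ^ k) P)
    (v : EuclideanSpace ℝ (Fin n)) (hv : ‖v‖ = 1)
    (r : ℕ) (hr : 2 ≤ r) (hreven : Even r)
    (δ : ℝ) (hδ0 : 0 < δ) (hδ1 : δ ≤ 1)
    (hdev : δ * (∫ x, ⟪x, v⟫ ^ r ∂stdGaussian n) ≤
      |(∫ ω, ⟪X ω, v⟫ ^ r ∂P) - ∫ x, ⟪x, v⟫ ^ r ∂stdGaussian n|) :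
    δ ^ 2 / 4 * (∫ x, ⟪x, v⟫ ^ r ∂stdGaussian n) ≤
        |(∫ ω, ‖X ω‖ ^ r ∂P) - ∫ x, ‖x‖ ^ r ∂stdGaussian n| ∨
    15 * δ ^ 2 / 64 * (∫ x, ⟪x, v⟫ ^ r ∂stdGaussian n) ^ 2 ≤
        |(∫ ω, ⟪X ω, X' ω⟫ ^ r ∂P) -
          ∫ p, ⟪p.1, p.2⟫ ^ r ∂((stdGaussian n).prod (stdGaussian n))| :=
  comparison_even_moments_general P X X' hX hX' hcopy hindep hmom v hv r hreven δ hδ0 hdev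

end
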